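/- arXiv:1509.07292 — 3 statements merged into one kernel-verified Lean document; each statement's English description precedes it below -/
import Mathlib

section
/- Let K, ε, T ≥ 0. Let D₁, D₂ : [0,T] → ℂ^{d×d} be continuous matrix-valued functions with ‖D₁(s) − D₂(s)‖ ≤ ε for all s ∈ [0,T], where ‖·‖ is the operator norm. Let M₁, M₂ : [0,T] → ℂ^{d×d} be differentiable with Mᵢ'(s) = −Mᵢ(s)² − Dᵢ(s) and ‖Mᵢ(s)‖ ≤ K for all s ∈ [0,T] and i = 1, 2, and suppose M₁(0) = M₂(0). Then for all s ∈ [0,T]: ‖M₁(s) − M₂(s)‖ ≤ ε · s · e^{2K·s}. -/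
/-!
The difference `Δ = M₁ - M₂` vanishes at `0` and satisfies
`Δ' = -(M₁ Δ + Δ M₂) - (D₁ - D₂)`, so `‖Δ'‖ ≤ 2K‖Δ‖ + ε` while both solutions stay in the ball of
radius `K`. Grönwall's inequality bounds `‖Δ(s)‖` by `ε (e^{2Ks} - 1) / (2K) ≤ ε s e^{2Ks}`.
-/

open Set Real

theorem Real.exp_sub_one_le_mul_exp (x : ℝ) : exp x - 1 ≤ x * exp x := by
  have h := add_one_le_exp (-x)
  have hinv : exp (-x) * exp x = 1 := by rw [← exp_add, neg_add_cancel, exp_zero]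
  nlinarith [exp_pos x]

theorem gronwallBound_zero_le_mul_exp {K ε : ℝ} (hK : 0 ≤ K) (hε : 0 ≤ ε) (x : ℝ) :
    gronwallBound 0 K ε x ≤ ε * x * exp (K * x) := by
  rcases hK.eq_or_lt with rfl | hK
  · simp [gronwallBound_K0]
  · rw [gronwallBound_of_K_ne_0 hK.ne']
    calc 0 * exp (K * x) + ε / K * (exp (K * x) - 1)
        ≤ ε / K * (K * x * exp (K * x)) := by
          rw [zero_mul, zero_add]
          gcongr
          exact exp_sub_one_le_mul_exp _
      _ = ε * x * exp (K * x) := by field_simp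

theorem norm_mul_self_sub_mul_self_le {R : Type*} [NonUnitalSeminormedRing R] (a b : R) :
    ‖a * a - b * b‖ ≤ (‖a‖ + ‖b‖) * ‖a - b‖ :=
  calc ‖a * a - b * b‖ = ‖a * (a - b) + (a - b) * b‖ := by noncomm_ring
    _ ≤ ‖a‖ * ‖a - b‖ + ‖a - b‖ * ‖b‖ := norm_add_le_of_le (norm_mul_le _ _) (norm_mul_le _ _)
    _ = (‖a‖ + ‖b‖) * ‖a - b‖ := by ring

theorem norm_riccati_field_sub_le {R : Type*} [NonUnitalSeminormedRing R]
    {a b d₁ d₂ : R} {K ε : ℝ} (ha : ‖a‖ ≤ K) (hb : ‖b‖ ≤ K) (hd : ‖d₁ - d₂‖ ≤ ε) :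
    ‖(-(a * a) - d₁) - (-(b * b) - d₂)‖ ≤ 2 * K * ‖a - b‖ + ε :=
  calc ‖(-(a * a) - d₁) - (-(b * b) - d₂)‖ = ‖(b * b - a * a) - (d₁ - d₂)‖ := by
        congr 1; abel
    _ ≤ ‖b * b - a * a‖ + ‖d₁ - d₂‖ := norm_sub_le _ _
    _ = ‖a * a - b * b‖ + ‖d₁ - d₂‖ := by rw [norm_sub_rev]
    _ ≤ (‖a‖ + ‖b‖) * ‖a - b‖ + ε := add_le_add (norm_mul_self_sub_mul_self_le a b) hd
    _ ≤ 2 * K * ‖a - b‖ + ε := by gcongr; linarith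

theorem norm_sub_le_of_riccati {R : Type*} [NormedRing R] [NormedSpace ℝ R]
    {M₁ M₂ D₁ D₂ : ℝ → R} {K ε T : ℝ}
    (hM₁ : ∀ s ∈ Icc 0 T, HasDerivAt M₁ (-(M₁ s * M₁ s) - D₁ s) s)
    (hM₂ : ∀ s ∈ Icc 0 T, HasDerivAt M₂ (-(M₂ s * M₂ s) - D₂ s) s)
    (hM₁bd : ∀ s ∈ Icc 0 T, ‖M₁ s‖ ≤ K) (hM₂bd : ∀ s ∈ Icc 0 T, ‖M₂ s‖ ≤ K)
    (hD : ∀ s ∈ Icc 0 T, ‖D₁ s - D₂ s‖ ≤ ε) (h0 : M₁ 0 = M₂ 0) :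
    ∀ s ∈ Icc 0 T, ‖M₁ s - M₂ s‖ ≤ ε * s * exp (2 * K * s) := by
  intro s hs
  have hzero : (0 : ℝ) ∈ Icc 0 T := ⟨le_rfl, hs.1.trans hs.2⟩
  have hK : 0 ≤ 2 * K := by linarith [(norm_nonneg _).trans (hM₁bd 0 hzero)]
  have hε : 0 ≤ ε := (norm_nonneg _).trans (hD 0 hzero)
  have hderiv : ∀ t ∈ Icc 0 T, HasDerivAt (fun t ↦ M₁ t - M₂ t)
      ((-(M₁ t * M₁ t) - D₁ t) - (-(M₂ t * M₂ t) - D₂ t)) t :=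
    fun t ht ↦ (hM₁ t ht).sub (hM₂ t ht)
  have hgronwall := norm_le_gronwallBound_of_norm_deriv_right_le (δ := 0)
    (fun t ht ↦ (hderiv t ht).continuousAt.continuousWithinAt)
    (fun t ht ↦ (hderiv t (Ico_subset_Icc_self ht)).hasDerivWithinAt)
    (by simp [h0])
    (fun t ht ↦ have ht := Ico_subset_Icc_self ht
      norm_riccati_field_sub_le (hM₁bd t ht) (hM₂bd t ht) (hD t ht)) s hs
  rw [sub_zero] at hgronwall
  exact hgronwall.trans (gronwallBound_zero_le_mul_exp hK hε s)

theorem stmt_7_general (d : ℕ) (K ε T : ℝ)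
    (D₁ D₂ M₁ M₂ : ℝ →
      (EuclideanSpace ℂ (Fin d) →L[ℂ] EuclideanSpace ℂ (Fin d)))
    (hDclose : ∀ s ∈ Set.Icc (0 : ℝ) T, ‖D₁ s - D₂ s‖ ≤ ε)
    (hM₁ : ∀ s ∈ Set.Icc (0 : ℝ) T,
      HasDerivAt M₁ (-(M₁ s ∘L M₁ s) - D₁ s) s)
    (hM₂ : ∀ s ∈ Set.Icc (0 : ℝ) T,
      HasDerivAt M₂ (-(M₂ s ∘L M₂ s) - D₂ s) s)
    (hM₁bd : ∀ s ∈ Set.Icc (0 : ℝ) T, ‖M₁ s‖ ≤ K)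
    (hM₂bd : ∀ s ∈ Set.Icc (0 : ℝ) T, ‖M₂ s‖ ≤ K)
    (h0 : M₁ 0 = M₂ 0) :
    ∀ s ∈ Set.Icc (0 : ℝ) T, ‖M₁ s - M₂ s‖ ≤ ε * s * Real.exp (2 * K * s) :=
  norm_sub_le_of_riccati hM₁ hM₂ hM₁bd hM₂bd hDclose h0

/-- Gronwall stability for matrix Riccati equations: two bounded solutions of
`M' = −M² − Dᵢ(s)` (operators on `ℂ^d`, operator norm) with the same initial
data and `ε`-close inhomogeneities satisfy `‖M₁(s) − M₂(s)‖ ≤ ε·s·e^{2Ks}`. -/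
theorem stmt_7 (d : ℕ) (K ε T : ℝ) (hK : 0 ≤ K) (hε : 0 ≤ ε) (hT : 0 ≤ T)
    (D₁ D₂ M₁ M₂ : ℝ →
      (EuclideanSpace ℂ (Fin d) →L[ℂ] EuclideanSpace ℂ (Fin d)))
    (hD₁ : ContinuousOn D₁ (Set.Icc 0 T)) (hD₂ : ContinuousOn D₂ (Set.Icc 0 T))
    (hDclose : ∀ s ∈ Set.Icc (0 : ℝ) T, ‖D₁ s - D₂ s‖ ≤ ε)
    (hM₁ : ∀ s ∈ Set.Icc (0 : ℝ) T,
      HasDerivAt M₁ (-(M₁ s ∘L M₁ s) - D₁ s) s)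
    (hM₂ : ∀ s ∈ Set.Icc (0 : ℝ) T,
      HasDerivAt M₂ (-(M₂ s ∘L M₂ s) - D₂ s) s)
    (hM₁bd : ∀ s ∈ Set.Icc (0 : ℝ) T, ‖M₁ s‖ ≤ K)
    (hM₂bd : ∀ s ∈ Set.Icc (0 : ℝ) T, ‖M₂ s‖ ≤ K)
    (h0 : M₁ 0 = M₂ 0) :
    ∀ s ∈ Set.Icc (0 : ℝ) T, ‖M₁ s - M₂ s‖ ≤ ε * s * Real.exp (2 * K * s) :=
  stmt_7_general d K ε T D₁ D₂ M₁ M₂ hDclose hM₁ hM₂ hM₁bd hM₂bd h0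
end

section
/- Let T > 0, let q : ℝ^d → ℝ be continuous, let H₀ ∈ ℝ, and let γ : [0,T] → ℝ^d be continuously differentiable with (1/2)|γ'(t)|² + q(γ(t)) = H₀ and q(γ(t)) < H₀ for all t ∈ [0,T]. Define s(t) = ∫₀ᵗ 2(H₀ − q(γ(u))) du, a strictly increasing bijection from [0,T] onto [0, s(T)] with inverse t(·). Then the reparametrized curve σ(u) := γ(t(u)) is differentiable on (0, s(T)) and satisfies 2·(H₀ − q(σ(u)))·|σ'(u)|² = 1 for all u ∈ (0, s(T)). -/
/-!
By the fundamental theorem of calculus `S' = 2 (H₀ - q ∘ γ)`, which is positive, so `S` is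
strictly increasing and its inverse `τ` is continuous and differentiable with
`τ' = 1 / S' ∘ τ`. The chain rule gives `σ' = γ' (τ u) / (2 (H₀ - q (σ u)))`, and the energy
identity `‖γ'‖² = 2 (H₀ - q ∘ γ)` turns `2 (H₀ - q (σ u)) ‖σ'‖²` into `1`.
-/

open Set Filter MeasureTheory

theorem hasDerivAt_integral_of_continuousOn {f : ℝ → ℝ} {a b t : ℝ}
    (hf : ContinuousOn f (Icc a b)) (ht : t ∈ Ioo a b) :
    HasDerivAt (fun x => ∫ u in a..x, f u) (f t) t :=
  intervalIntegral.integral_hasDerivAt_right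
    ((hf.mono (Icc_subset_Icc_right ht.2.le)).intervalIntegrable_of_Icc ht.1.le)
    ((hf.mono Ioo_subset_Icc_self).stronglyMeasurableAtFilter isOpen_Ioo t ht)
    (hf.continuousAt (Icc_mem_nhds ht.1 ht.2))

theorem strictMonoOn_integral_of_pos {f : ℝ → ℝ} {a b : ℝ}
    (hf : IntervalIntegrable f volume a b) (hpos : ∀ t ∈ Ioo a b, 0 < f t) :
    StrictMonoOn (fun t => ∫ u in a..t, f u) (Icc a b) := by
  intro x hx y hy hxy
  have hint : ∀ {c}, c ∈ Icc a b → IntervalIntegrable f volume a c := fun hc =>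
    hf.mono_set (uIcc_subset_uIcc left_mem_uIcc (mem_uIcc_of_le hc.1 hc.2))
  have hxy_pos : 0 < ∫ u in x..y, f u :=
    intervalIntegral.intervalIntegral_pos_of_pos_on ((hint hx).symm.trans (hint hy))
      (fun t ht => hpos t ⟨hx.1.trans_lt ht.1, ht.2.trans_le hy.2⟩) hxy
  have := intervalIntegral.integral_interval_sub_left (hint hy) (hint hx)
  simp only
  linarith

section Inverse

variable {S τ : ℝ → ℝ} {a b u : ℝ}

theorem Set.RightInvOn.mapsTo_Ioo
    (hinv : RightInvOn τ S (Icc (S a) (S b))) (hτ : MapsTo τ (Icc (S a) (S b)) (Icc a b)) :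
    MapsTo τ (Ioo (S a) (S b)) (Ioo a b) := by
  intro v hv
  have hv' := hτ (Ioo_subset_Icc_self hv)
  refine ⟨hv'.1.lt_of_ne ?_, hv'.2.lt_of_ne ?_⟩
  · intro h
    exact hv.1.ne (by rw [h, hinv (Ioo_subset_Icc_self hv)])
  · intro h
    exact hv.2.ne' (by rw [← h, hinv (Ioo_subset_Icc_self hv)])

theorem StrictMonoOn.continuousAt_of_invOn (hS : StrictMonoOn S (Icc a b))
    (hinv : InvOn τ S (Icc a b) (Icc (S a) (S b))) (hτ : MapsTo τ (Icc (S a) (S b)) (Icc a b))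
    (hu : u ∈ Ioo (S a) (S b)) : ContinuousAt τ u := by
  have hτ_mono : StrictMonoOn τ (Icc (S a) (S b)) := fun v hv w hw hvw =>
    hS.lt_iff_lt (hτ hv) (hτ hw) |>.1 (by rwa [hinv.2 hv, hinv.2 hw])
  obtain ⟨hτu₁, hτu₂⟩ := hinv.2.mapsTo_Ioo hτ hu
  refine hτ_mono.continuousAt_of_image_mem_nhds (Icc_mem_nhds hu.1 hu.2) ?_
  refine mem_of_superset (Icc_mem_nhds hτu₁ hτu₂) fun t ht => ⟨S t, ?_, hinv.1 ht⟩
  exact ⟨hS.monotoneOn (left_mem_Icc.2 (ht.1.trans ht.2)) ht ht.1,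
    hS.monotoneOn ht (right_mem_Icc.2 (ht.1.trans ht.2)) ht.2⟩

theorem StrictMonoOn.hasDerivAt_of_invOn (hS : StrictMonoOn S (Icc a b))
    (hinv : InvOn τ S (Icc a b) (Icc (S a) (S b))) (hτ : MapsTo τ (Icc (S a) (S b)) (Icc a b))
    (hu : u ∈ Ioo (S a) (S b)) {S' : ℝ} (hSd : HasDerivAt S S' (τ u)) (hS' : S' ≠ 0) :
    HasDerivAt τ S'⁻¹ u :=
  hSd.of_local_left_inverse (hS.continuousAt_of_invOn hinv hτ hu) hS' <|
    eventually_of_mem (Ioo_mem_nhds hu.1 hu.2) fun _ hv => hinv.2 (Ioo_subset_Icc_self hv)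

end Inverse

theorem stmt_9_general (d : ℕ) (T : ℝ) (hT : 0 < T)
    (q : EuclideanSpace ℝ (Fin d) → ℝ) (hq : Continuous q) (H₀ : ℝ)
    (γ γ' : ℝ → EuclideanSpace ℝ (Fin d))
    (hγ : ∀ t ∈ Set.Icc (0 : ℝ) T, HasDerivAt γ (γ' t) t)
    (henergy : ∀ t ∈ Set.Icc (0 : ℝ) T,
      (1 / 2) * ‖γ' t‖ ^ 2 + q (γ t) = H₀)
    (hsub : ∀ t ∈ Set.Icc (0 : ℝ) T, q (γ t) < H₀)
    (S : ℝ → ℝ) (hS : ∀ t, S t = ∫ u in (0 : ℝ)..t, 2 * (H₀ - q (γ u)))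
    (τ : ℝ → ℝ)
    (hτ₁ : ∀ t ∈ Set.Icc (0 : ℝ) T, τ (S t) = t)
    (hτ₂ : ∀ u ∈ Set.Icc (0 : ℝ) (S T), S (τ u) = u ∧ τ u ∈ Set.Icc (0 : ℝ) T) :
    ∀ u ∈ Set.Ioo (0 : ℝ) (S T),
      ∃ σ' : EuclideanSpace ℝ (Fin d),
        HasDerivAt (fun v => γ (τ v)) σ' u ∧
        2 * (H₀ - q (γ (τ u))) * ‖σ'‖ ^ 2 = 1 := by
  set f : ℝ → ℝ := fun t => 2 * (H₀ - q (γ t))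
  have hγ_cont : ContinuousOn γ (Icc 0 T) := fun t ht =>
    (hγ t ht).continuousAt.continuousWithinAt
  have hf : ContinuousOn f (Icc 0 T) := by fun_prop
  have hf_pos : ∀ t ∈ Icc 0 T, 0 < f t := fun t ht => by linarith [hsub t ht]
  have hS_eq : S = fun t => ∫ u in (0 : ℝ)..t, f u := funext hS
  have hS_mono : StrictMonoOn S (Icc 0 T) := hS_eq ▸ strictMonoOn_integral_of_pos
    (hf.intervalIntegrable_of_Icc hT.le) fun t ht => hf_pos t (Ioo_subset_Icc_self ht)
  have hS₀ : S 0 = 0 := by simp [hS]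
  have hinv : InvOn τ S (Icc 0 T) (Icc (S 0) (S T)) :=
    ⟨hτ₁, fun v hv => (hτ₂ v (hS₀ ▸ hv)).1⟩
  have hmaps : MapsTo τ (Icc (S 0) (S T)) (Icc 0 T) := fun v hv => (hτ₂ v (hS₀ ▸ hv)).2
  intro u hu
  rw [← hS₀] at hu
  have hτu : τ u ∈ Ioo 0 T := hinv.2.mapsTo_Ioo hmaps hu
  have hτu' : τ u ∈ Icc 0 T := Ioo_subset_Icc_self hτu
  have hfτ_pos : 0 < f (τ u) := hf_pos _ hτu'
  have hτ_deriv : HasDerivAt τ (f (τ u))⁻¹ u :=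
    hS_mono.hasDerivAt_of_invOn hinv hmaps hu
      (hS_eq ▸ hasDerivAt_integral_of_continuousOn hf hτu) hfτ_pos.ne'
  refine ⟨(f (τ u))⁻¹ • γ' (τ u), (hγ _ hτu').scomp u hτ_deriv, ?_⟩
  have hspeed : ‖γ' (τ u)‖ ^ 2 = f (τ u) := by linarith [henergy _ hτu']
  change f (τ u) * _ = 1
  rw [norm_smul, mul_pow, hspeed, norm_inv, Real.norm_of_nonneg hfτ_pos.le]
  field_simp [hfτ_pos.ne']

/-- Maupertuis principle (Euclidean case): if `γ` has energy
`(1/2)|γ'|² + q(γ) = H₀`, then after the reparametrization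
`s(t) = ∫₀ᵗ 2(H₀ − q(γ(u))) du` the curve `σ(u) = γ(t(u))` has unit speed
for the conformal metric `2(H₀ − q)·g_Euclidean`:
`2(H₀ − q(σ(u)))·|σ'(u)|² = 1`. -/
theorem stmt_9 (d : ℕ) (T : ℝ) (hT : 0 < T)
    (q : EuclideanSpace ℝ (Fin d) → ℝ) (hq : Continuous q) (H₀ : ℝ)
    (γ γ' : ℝ → EuclideanSpace ℝ (Fin d))
    (hγ : ∀ t ∈ Set.Icc (0 : ℝ) T, HasDerivAt γ (γ' t) t)
    (hγ' : ContinuousOn γ' (Set.Icc 0 T))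
    (henergy : ∀ t ∈ Set.Icc (0 : ℝ) T,
      (1 / 2) * ‖γ' t‖ ^ 2 + q (γ t) = H₀)
    (hsub : ∀ t ∈ Set.Icc (0 : ℝ) T, q (γ t) < H₀)
    (S : ℝ → ℝ) (hS : ∀ t, S t = ∫ u in (0 : ℝ)..t, 2 * (H₀ - q (γ u)))
    (τ : ℝ → ℝ)
    (hτ₁ : ∀ t ∈ Set.Icc (0 : ℝ) T, τ (S t) = t)
    (hτ₂ : ∀ u ∈ Set.Icc (0 : ℝ) (S T), S (τ u) = u ∧ τ u ∈ Set.Icc (0 : ℝ) T) :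
    ∀ u ∈ Set.Ioo (0 : ℝ) (S T),
      ∃ σ' : EuclideanSpace ℝ (Fin d),
        HasDerivAt (fun v => γ (τ v)) σ' u ∧
        2 * (H₀ - q (γ (τ u))) * ‖σ'‖ ^ 2 = 1 :=
  stmt_9_general d T hT q hq H₀ γ γ' hγ henergy hsub S hS τ hτ₁ hτ₂
end

section
/- Let N be a natural number and l an integer with l ≥ −2 and N − 2l − 2 ≥ 0, let c > 0, let ρ : ℝ^d → [0,∞) be any function, and for each integer j with −2 ≤ j ≤ l let C_j ≥ 0 and c_j : ℝ^d → ℂ satisfy |c_j(x)| ≤ C_j · ρ(x)^{N−2j−2} for all x ∈ ℝ^d. Then for every λ ≥ 1 and every x ∈ ℝ^d: |Σ_{j=−2}^{l} c_j(x)·λ^{−j}| · exp(−λ·c·ρ(x)²) ≤ K · λ^{1 − N/2} · exp(−λ·c·ρ(x)²/2), where K = Σ_{j=−2}^{l} C_j · ((N−2j−2)/e)^{(N−2j−2)/2} · c^{−(N−2j−2)/2} (with the convention 0⁰ = 1). -/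
/-!
Split the Gaussian factor as `exp (-λcρ²) = exp (-λcρ²/2) ^ 2` and use one half to absorb the
power `ρ ^ (N - 2j - 2)` of each term: the function `y ↦ y ^ q * exp (-y)` attains its maximum
`(q / e) ^ q` at `y = q`. Scaling `y = λcρ²/2` turns this into a factor `(λc) ^ (-(N - 2j - 2)/2)`,
whose power of `λ` combines with `λ ^ (-j)` to `λ ^ (1 - N/2)` for every `j`; the triangle
inequality then sums the term bounds.
-/

open Real

theorem rpow_mul_exp_neg_le {q y : ℝ} (hq : 0 ≤ q) (hy : 0 ≤ y) :
    y ^ q * exp (-y) ≤ (q / exp 1) ^ q := by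
  rcases hq.eq_or_lt with rfl | hq
  · simpa using hy
  have h : (y / q) ^ q ≤ exp (y - q) :=
    calc (y / q) ^ q ≤ exp (y / q - 1) ^ q := by
          gcongr; linarith [add_one_le_exp (y / q - 1)]
      _ = exp (y - q) := by rw [← exp_mul]; field_simp
  rw [div_rpow hy hq.le, div_le_iff₀ (by positivity)] at h
  calc y ^ q * exp (-y) ≤ exp (y - q) * q ^ q * exp (-y) := by gcongr
    _ = (q / exp 1) ^ q := by
      rw [div_rpow hq.le (exp_pos 1).le, exp_one_rpow, div_eq_mul_inv, ← exp_neg,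
        mul_right_comm, ← exp_add]
      ring_nf

theorem rpow_mul_exp_neg_mul_sq_le {p a b : ℝ} (hp : 0 ≤ p) (ha : 0 < a) (hb : 0 ≤ b) :
    b ^ p * exp (-(a * b ^ 2)) ≤
      (p / exp 1) ^ (p / 2) * a ^ (-(p / 2)) * exp (-(a * b ^ 2) / 2) := by
  have hb2 : b ^ p = (b ^ 2) ^ (p / 2) := by
    rw [← rpow_natCast, ← rpow_mul hb]; ring_nf
  have hconst : (p / exp 1) ^ (p / 2) * a ^ (-(p / 2)) =
      (p / 2 / exp 1) ^ (p / 2) / (a / 2) ^ (p / 2) := by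
    rw [rpow_neg ha.le, ← div_eq_mul_inv, ← div_rpow, ← div_rpow]
    · congr 1; field_simp
    all_goals positivity
  have key := rpow_mul_exp_neg_le (by positivity : 0 ≤ p / 2) (by positivity : 0 ≤ a / 2 * b ^ 2)
  rw [mul_rpow (by positivity) (by positivity), ← hb2] at key
  calc b ^ p * exp (-(a * b ^ 2))
      = b ^ p * exp (-(a / 2 * b ^ 2)) * exp (-(a * b ^ 2) / 2) := by
        rw [mul_assoc, ← exp_add]; ring_nf
    _ ≤ _ := by
      refine mul_le_mul_of_nonneg_right ?_ (exp_pos _).le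
      rw [hconst, le_div_iff₀ (by positivity)]
      linarith

theorem norm_mul_zpow_neg_mul_exp_neg_le {z : ℂ} {C r c lam N : ℝ} {j : ℤ}
    (hC : 0 ≤ C) (hr : 0 ≤ r) (hc : 0 < c) (hlam : 0 < lam) (hp : 0 ≤ N - 2 * j - 2)
    (hz : ‖z‖ ≤ C * r ^ (N - 2 * j - 2)) :
    ‖z * (lam : ℂ) ^ (-j)‖ * exp (-(lam * c * r ^ 2)) ≤
      C * ((N - 2 * j - 2) / exp 1) ^ ((N - 2 * j - 2) / 2) * c ^ (-((N - 2 * j - 2) / 2)) *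
        lam ^ (1 - N / 2) * exp (-(lam * c * r ^ 2) / 2) := by
  set p := N - 2 * j - 2 with hp_def
  have hnorm : ‖z * (lam : ℂ) ^ (-j)‖ = ‖z‖ * lam ^ (-j : ℝ) := by
    rw [norm_mul, norm_zpow, Complex.norm_of_nonneg hlam.le, ← rpow_intCast, Int.cast_neg]
  have hlam_pow : lam ^ (-j : ℝ) * lam ^ (-(p / 2)) = lam ^ (1 - N / 2) := by
    rw [← rpow_add hlam, hp_def]; ring_nf
  have hClam : 0 ≤ C * lam ^ (-j : ℝ) := mul_nonneg hC (rpow_nonneg hlam.le _)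
  calc ‖z * (lam : ℂ) ^ (-j)‖ * exp (-(lam * c * r ^ 2))
      ≤ C * r ^ p * lam ^ (-j : ℝ) * exp (-(lam * c * r ^ 2)) := by
        rw [hnorm]; gcongr
    _ = C * lam ^ (-j : ℝ) * (r ^ p * exp (-(lam * c * r ^ 2))) := by ring
    _ ≤ C * lam ^ (-j : ℝ) *
          ((p / exp 1) ^ (p / 2) * (lam * c) ^ (-(p / 2)) * exp (-(lam * c * r ^ 2) / 2)) :=
        mul_le_mul_of_nonneg_left (rpow_mul_exp_neg_mul_sq_le hp (mul_pos hlam hc) hr) hClam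
    _ = _ := by
        rw [mul_rpow hlam.le hc.le, ← hlam_pow]; ring

theorem stmt_12_general (N : ℕ) (l : ℤ) (hNl : 0 ≤ (N : ℤ) - 2 * l - 2)
    (c : ℝ) (hc : 0 < c) (d : ℕ)
    (ρ : (Fin d → ℝ) → ℝ) (hρ : ∀ x, 0 ≤ ρ x)
    (Cb : ℤ → ℝ) (f : ℤ → (Fin d → ℝ) → ℂ)
    (hCb : ∀ j ∈ Finset.Icc (-2 : ℤ) l, 0 ≤ Cb j)
    (hf : ∀ j ∈ Finset.Icc (-2 : ℤ) l, ∀ x,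
      ‖f j x‖ ≤ Cb j * ρ x ^ ((N : ℝ) - 2 * (j : ℝ) - 2)) :
    ∀ lam : ℝ, 1 ≤ lam → ∀ x : Fin d → ℝ,
      ‖∑ j ∈ Finset.Icc (-2 : ℤ) l, f j x * (lam : ℂ) ^ (-j)‖ *
          Real.exp (-(lam * c * ρ x ^ 2)) ≤
        (∑ j ∈ Finset.Icc (-2 : ℤ) l,
            Cb j * (((N : ℝ) - 2 * (j : ℝ) - 2) / Real.exp 1) ^
                (((N : ℝ) - 2 * (j : ℝ) - 2) / 2) *
              c ^ (-(((N : ℝ) - 2 * (j : ℝ) - 2) / 2))) *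
          lam ^ ((1 : ℝ) - (N : ℝ) / 2) * Real.exp (-(lam * c * ρ x ^ 2) / 2) := by
  intro lam hlam x
  simp only [Finset.sum_mul]
  refine (mul_le_mul_of_nonneg_right (norm_sum_le _ _) (exp_pos _).le).trans ?_
  rw [Finset.sum_mul]
  refine Finset.sum_le_sum fun j hj => ?_
  have hp : (0 : ℝ) ≤ N - 2 * j - 2 := by
    have hjl : (j : ℝ) ≤ l := by exact_mod_cast (Finset.mem_Icc.mp hj).2
    have hNl' : (0 : ℝ) ≤ N - 2 * l - 2 := by exact_mod_cast hNl
    linarith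
  exact norm_mul_zpow_neg_mul_exp_neg_le (hCb j hj) (hρ x) hc (by linarith) hp (hf j hj x)

/-- Pointwise Gaussian beam error estimate: if each coefficient `c_j` vanishes
to order `N − 2j − 2` (i.e. `|c_j(x)| ≤ C_j ρ(x)^{N−2j−2}`), then the residual
`|Σ_j c_j(x) λ^{−j}| e^{−λcρ²}` is bounded by `K λ^{1−N/2} e^{−λcρ²/2}` with
`K = Σ_j C_j ((N−2j−2)/e)^{(N−2j−2)/2} c^{−(N−2j−2)/2}`. -/
theorem stmt_12 (N : ℕ) (l : ℤ) (hl : -2 ≤ l) (hNl : 0 ≤ (N : ℤ) - 2 * l - 2)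
    (c : ℝ) (hc : 0 < c) (d : ℕ)
    (ρ : (Fin d → ℝ) → ℝ) (hρ : ∀ x, 0 ≤ ρ x)
    (Cb : ℤ → ℝ) (f : ℤ → (Fin d → ℝ) → ℂ)
    (hCb : ∀ j ∈ Finset.Icc (-2 : ℤ) l, 0 ≤ Cb j)
    (hf : ∀ j ∈ Finset.Icc (-2 : ℤ) l, ∀ x,
      ‖f j x‖ ≤ Cb j * ρ x ^ ((N : ℝ) - 2 * (j : ℝ) - 2)) :
    ∀ lam : ℝ, 1 ≤ lam → ∀ x : Fin d → ℝ,
      ‖∑ j ∈ Finset.Icc (-2 : ℤ) l, f j x * (lam : ℂ) ^ (-j)‖ *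
          Real.exp (-(lam * c * ρ x ^ 2)) ≤
        (∑ j ∈ Finset.Icc (-2 : ℤ) l,
            Cb j * (((N : ℝ) - 2 * (j : ℝ) - 2) / Real.exp 1) ^
                (((N : ℝ) - 2 * (j : ℝ) - 2) / 2) *
              c ^ (-(((N : ℝ) - 2 * (j : ℝ) - 2) / 2))) *
          lam ^ ((1 : ℝ) - (N : ℝ) / 2) * Real.exp (-(lam * c * ρ x ^ 2) / 2) :=
  stmt_12_general N l hNl c hc d ρ hρ Cb f hCb hf
end
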